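/- arXiv:2404.11126 — 3 statements merged into one kernel-verified Lean document; each statement's English description precedes it below -/
import Mathlib

section
/- Let G > 2 and let α_g = (cos θ_g, sin θ_g) for g = 1,…,G with 0 ≤ θ_1 < θ_2 < ⋯ < θ_G < 2π be distinct unit directions, let h > 0 and T > 0. Then there exist a point r₀ ∈ Ω_T(hα_1) and ρ > 0 such that the open ball B_ρ(r₀) is contained in Ω_T(hα_1) and disjoint from Ω_T(hα_g) for all g ≠ 1; in particular ω(r) = 1 for all r ∈ B_ρ(r₀). -/
/-! The point `p = (h + T) • α₁` lies on the boundary of the first aperture and, since the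
directions are distinct unit vectors, strictly outside every other (closed) aperture. So a
neighbourhood of `p` misses the other apertures, and as `p` is in the closure of the open first
aperture, that neighbourhood contains a small ball inside the first aperture. -/

open Metric

theorem Real.eq_of_cos_eq_of_sin_eq {a x y : ℝ} (hx : x ∈ Set.Ico a (a + 2 * Real.pi))
    (hy : y ∈ Set.Ico a (a + 2 * Real.pi)) (hcos : cos x = cos y) (hsin : sin x = sin y) : x = y := by
  have hcos_sub : cos (x - y) = 1 := by
    rw [cos_sub, hcos, hsin, ← sq, ← sq, cos_sq_add_sin_sq]
  have := (cos_eq_one_iff_of_lt_of_lt (by linarith [hx.1, hy.2]) (by linarith [hx.2, hy.1])).1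
    hcos_sub
  linarith

theorem EuclideanSpace.norm_eq_one_of_eq_cos_sin {v : EuclideanSpace ℝ (Fin 2)} {t : ℝ}
    (h0 : v 0 = Real.cos t) (h1 : v 1 = Real.sin t) : ‖v‖ = 1 := by
  rw [EuclideanSpace.norm_eq, Fin.sum_univ_two, h0, h1]
  simp

theorem lt_dist_add_smul_smul {E : Type*} [NormedAddCommGroup E] [InnerProductSpace ℝ E]
    {u v : E} (hu : ‖u‖ = 1) (hv : ‖v‖ = 1) (huv : u ≠ v) {h T : ℝ} (hh : 0 < h) (hT : 0 ≤ T) :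
    T < dist ((h + T) • u) (h • v) := by
  have hinner : inner ℝ u v < 1 := (inner_lt_one_iff_real_of_norm_eq_one hu hv).2 huv
  have hsq : dist ((h + T) • u) (h • v) ^ 2 = T ^ 2 + 2 * h * (h + T) * (1 - inner ℝ u v) := by
    rw [dist_eq_norm, norm_sub_sq_real, norm_smul, norm_smul, real_inner_smul_left,
      real_inner_smul_right, hu, hv, Real.norm_of_nonneg hh.le,
      Real.norm_of_nonneg (by linarith)]
    ring
  have hpos : 0 < 2 * h * (h + T) * (1 - inner ℝ u v) := by
    have : 0 < h + T := by linarith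
    have : 0 < 1 - inner ℝ u v := by linarith
    positivity
  nlinarith [dist_nonneg (x := (h + T) • u) (y := h • v)]

theorem exists_ball_subset_closedBall_disjoint {E : Type*} [NormedAddCommGroup E]
    [NormedSpace ℝ E] {c p : E} {T : ℝ} {F : Set E} (hT : T ≠ 0) (hF : IsClosed F)
    (hp : p ∈ closedBall c T) (hpF : p ∉ F) :
    ∃ r₀ ρ, 0 < ρ ∧ ball r₀ ρ ⊆ closedBall c T ∧ Disjoint (ball r₀ ρ) F := by
  rw [← closure_ball c hT] at hp
  obtain ⟨r₀, hr₀F, hr₀c⟩ := mem_closure_iff.1 hp Fᶜ hF.isOpen_compl hpF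
  obtain ⟨ρ, hρ, hsub⟩ :=
    isOpen_iff.1 (isOpen_ball.inter hF.isOpen_compl) r₀ ⟨hr₀c, hr₀F⟩
  exact ⟨r₀, ρ, hρ, fun x hx => ball_subset_closedBall (hsub hx).1,
    Set.disjoint_left.2 fun x hx => (hsub hx).2⟩

theorem Finset.sum_indicator_const_eq_of_mem_unique {ι X M : Type*} [Fintype ι]
    [AddCommMonoid M] {S : ι → Set X} {i : ι} {x : X} (m : M) (hi : x ∈ S i)
    (hj : ∀ j ≠ i, x ∉ S j) : ∑ j, (S j).indicator (fun _ => m) x = m := by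
  rw [Finset.sum_eq_single_of_mem i (Finset.mem_univ i)
    fun j _ hji => Set.indicator_of_notMem (hj j hji) _]
  exact Set.indicator_of_mem hi _

theorem stmt_3 (T h : ℝ) (hT : 0 < T) (hh : 0 < h) (G : ℕ) (hG : 2 < G)
    (θ : Fin G → ℝ) (hθmono : StrictMono θ)
    (hθrange : ∀ g, θ g ∈ Set.Ico 0 (2 * Real.pi))
    (α : Fin G → EuclideanSpace ℝ (Fin 2))
    (hα : ∀ g, α g 0 = Real.cos (θ g) ∧ α g 1 = Real.sin (θ g)) :
    ∃ (r₀ : EuclideanSpace ℝ (Fin 2)) (ρ : ℝ), 0 < ρ ∧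
      Metric.ball r₀ ρ ⊆ Metric.closedBall (h • α ⟨0, by omega⟩) T ∧
      (∀ g, g ≠ (⟨0, by omega⟩ : Fin G) →
        Disjoint (Metric.ball r₀ ρ) (Metric.closedBall (h • α g) T)) ∧
      ∀ r ∈ Metric.ball r₀ ρ,
        (∑ g : Fin G, (Metric.closedBall (h • α g) T).indicator (fun _ => (1 : ℕ)) r) = 1 := by
  set g₀ : Fin G := ⟨0, by omega⟩
  have hunit g : ‖α g‖ = 1 := EuclideanSpace.norm_eq_one_of_eq_cos_sin (hα g).1 (hα g).2
  have hinj : Function.Injective α := fun g g' hgg' => hθmono.injective <|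
    Real.eq_of_cos_eq_of_sin_eq (a := 0) (by rw [zero_add]; exact hθrange g)
      (by rw [zero_add]; exact hθrange g')
      (by rw [← (hα g).1, hgg', (hα g').1]) (by rw [← (hα g).2, hgg', (hα g').2])
  set F := ⋃ g ∈ Finset.univ.erase g₀, closedBall (h • α g) T
  have hFclosed : IsClosed F := isClosed_biUnion_finset fun _ _ => isClosed_closedBall
  have hp : (h + T) • α g₀ ∈ closedBall (h • α g₀) T := by
    rw [mem_closedBall, dist_eq_norm, ← sub_smul, add_sub_cancel_left, norm_smul, hunit,
      Real.norm_of_nonneg hT.le, mul_one]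
  have hpF : (h + T) • α g₀ ∉ F := by
    simp only [F, Set.mem_iUnion, mem_closedBall, not_exists, not_le]
    exact fun g hg => lt_dist_add_smul_smul (hunit g₀) (hunit g)
      (hinj.ne (Finset.ne_of_mem_erase hg).symm) hh hT.le
  obtain ⟨r₀, ρ, hρ, hsub, hdisj⟩ :=
    exists_ball_subset_closedBall_disjoint hT.ne' hFclosed hp hpF
  have hdisj_ne g (hg : g ≠ g₀) : Disjoint (ball r₀ ρ) (closedBall (h • α g) T) :=
    hdisj.mono_right (Set.subset_biUnion_of_mem (u := fun g => closedBall (h • α g) T)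
      (Finset.mem_erase.2 ⟨hg, Finset.mem_univ g⟩))
  exact ⟨r₀, ρ, hρ, hsub, hdisj_ne, fun r hr => Finset.sum_indicator_const_eq_of_mem_unique 1
    (hsub hr) fun g hg => Set.disjoint_left.1 (hdisj_ne g hg) hr⟩
end

section
/- Let B ⊂ Ω_T(h₁α) be a set on which the overlap function ω₁ equals 1 everywhere (with direction α among α₁,…,α_G), define Ω̄_T = {r ∈ Ω_T : r + h₁α ∈ B}, and for each layer l define Ω̄^l = {r + h_l α : r ∈ Ω̄_T}. Then for all l = 1,…,L and all points p ∈ Ω̄^l, the overlap function at height h_l satisfies ω_l(p) = 1, i.e., p ∈ Ω_T(h_l α) but p ∉ Ω_T(h_l α_g) for every direction α_g ≠ α. -/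
/-! The point `r + h • α` lies in the disk of radius `T` around `h • α_g` exactly when
`r + h • (α - α_g)` lies in `Ω_T`. For `r ∈ Ω_T` the heights `h ≥ 0` with this property form an
interval containing `0`, by convexity of the disk, so overlap with another disk at height `h_l`
would force overlap already at the lowest height `h_1 ≤ h_l`, which `B` excludes. -/

open Metric

theorem Convex.add_smul_mem_of_le {E : Type*} [AddCommGroup E] [Module ℝ E] {s : Set E}
    (hs : Convex ℝ s) {x v : E} (hx : x ∈ s) {a b : ℝ} (ha : 0 ≤ a) (hab : a ≤ b)
    (hb : x + b • v ∈ s) : x + a • v ∈ s := by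
  rcases (ha.trans hab).eq_or_lt with rfl | hb_pos
  · simpa [le_antisymm hab ha] using hx
  have hmem := hs.add_smul_mem hx hb ⟨div_nonneg ha hb_pos.le, div_le_one_of_le₀ hab hb_pos.le⟩
  rwa [smul_smul, div_mul_cancel₀ a hb_pos.ne'] at hmem

theorem add_smul_mem_closedBall_smul_of_le {E : Type*} [SeminormedAddCommGroup E]
    [NormedSpace ℝ E] {r u w : E} {T a b : ℝ} (hr : r ∈ closedBall 0 T) (ha : 0 ≤ a)
    (hab : a ≤ b) (hb : r + b • u ∈ closedBall (b • w) T) :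
    r + a • u ∈ closedBall (a • w) T := by
  have shift : ∀ c : ℝ, r + c • u ∈ closedBall (c • w) T ↔ r + c • (u - w) ∈ closedBall 0 T := by
    intro c
    rw [mem_closedBall, mem_closedBall, dist_eq_norm, dist_zero_right, smul_sub, add_sub_assoc]
  rw [shift] at hb ⊢
  exact (convex_closedBall 0 T).add_smul_mem_of_le hr ha hab hb

theorem stmt_4_general (T : ℝ) (G L : ℕ) (hL : 0 < L)
    (α : Fin G → EuclideanSpace ℝ (Fin 2))
    (h : Fin L → ℝ) (hpos : ∀ l, 0 < h l) (hmono : StrictMono h)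
    (g₀ : Fin G)
    (B : Set (EuclideanSpace ℝ (Fin 2)))
    (hB₂ : ∀ r ∈ B, ∀ g, g ≠ g₀ → r ∉ Metric.closedBall ((h ⟨0, hL⟩) • α g) T)
    (ΩbarT : Set (EuclideanSpace ℝ (Fin 2)))
    (hΩbarT : ΩbarT = {r ∈ Metric.closedBall (0 : EuclideanSpace ℝ (Fin 2)) T |
      r + (h ⟨0, hL⟩) • α g₀ ∈ B}) :
    ∀ l : Fin L, ∀ p ∈ (fun r => r + (h l) • α g₀) '' ΩbarT,
      p ∈ Metric.closedBall ((h l) • α g₀) T ∧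
      ∀ g, g ≠ g₀ → p ∉ Metric.closedBall ((h l) • α g) T := by
  rintro l _ ⟨r, hr, rfl⟩
  subst hΩbarT
  obtain ⟨hr_ball, hr_B⟩ := hr
  refine ⟨by simpa [dist_eq_norm] using hr_ball, fun g hg hmem => ?_⟩
  have h_first_le : h ⟨0, hL⟩ ≤ h l := hmono.monotone (Nat.zero_le l.val)
  exact hB₂ _ hr_B g hg
    (add_smul_mem_closedBall_smul_of_le hr_ball (hpos _).le h_first_le hmem)

theorem stmt_4 (T : ℝ) (hT : 0 < T) (G L : ℕ) (hL : 0 < L)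
    (α : Fin G → EuclideanSpace ℝ (Fin 2)) (hunit : ∀ g, ‖α g‖ = 1)
    (hinj : Function.Injective α)
    (h : Fin L → ℝ) (hpos : ∀ l, 0 < h l) (hmono : StrictMono h)
    (g₀ : Fin G)
    (B : Set (EuclideanSpace ℝ (Fin 2)))
    (hB₁ : B ⊆ Metric.closedBall ((h ⟨0, hL⟩) • α g₀) T)
    (hB₂ : ∀ r ∈ B, ∀ g, g ≠ g₀ → r ∉ Metric.closedBall ((h ⟨0, hL⟩) • α g) T)
    (ΩbarT : Set (EuclideanSpace ℝ (Fin 2)))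
    (hΩbarT : ΩbarT = {r ∈ Metric.closedBall (0 : EuclideanSpace ℝ (Fin 2)) T |
      r + (h ⟨0, hL⟩) • α g₀ ∈ B}) :
    ∀ l : Fin L, ∀ p ∈ (fun r => r + (h l) • α g₀) '' ΩbarT,
      p ∈ Metric.closedBall ((h l) • α g₀) T ∧
      ∀ g, g ≠ g₀ → p ∉ Metric.closedBall ((h l) • α g) T :=
  stmt_4_general T G L hL α h hpos hmono g₀ B hB₂ ΩbarT hΩbarT
end

section
/- With the sets Ω̄^l = Ω̄_T + h_l α_g where ω_l ≡ 1 on Ω̄^l, the adjoint of the atmospheric tomography operator satisfies (A*φ)_l(r + h_l α_g) = γ_l φ_g(r) for every l = 1,…,L and every r ∈ Ω̄_T, where φ = (φ₁,…,φ_G). -/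
theorem Fintype.sum_indicator_apply_of_mem_of_forall_notMem {ι X M : Type*} [Fintype ι]
    [AddCommMonoid M] (s : ι → Set X) (f : ι → X → M) {i : ι} {x : X}
    (hi : x ∈ s i) (hj : ∀ j, j ≠ i → x ∉ s j) :
    ∑ j, (s j).indicator (f j) x = f i x := by
  rw [Fintype.sum_eq_single i fun j hji => Set.indicator_of_notMem (hj j hji) _]
  exact Set.indicator_of_mem hi _

theorem stmt_8_general (T : ℝ) (G L : ℕ)
    (α : Fin G → EuclideanSpace ℝ (Fin 2))
    (h : Fin L → ℝ)
    (γ : Fin L → ℝ)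
    (g : Fin G)
    (ΩbarT : Set (EuclideanSpace ℝ (Fin 2)))
    (hin : ∀ l : Fin L, ∀ r ∈ ΩbarT, r + (h l) • α g ∈ Metric.closedBall ((h l) • α g) T)
    (hdisj : ∀ l : Fin L, ∀ g' : Fin G, g' ≠ g → ∀ r ∈ ΩbarT,
      r + (h l) • α g ∉ Metric.closedBall ((h l) • α g') T)
    (φ : Fin G → EuclideanSpace ℝ (Fin 2) → ℝ)
    (Astarφ : Fin L → EuclideanSpace ℝ (Fin 2) → ℝ)
    (hAstar : ∀ l r, Astarφ l r = ∑ g' : Fin G,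
      γ l * (Metric.closedBall ((h l) • α g') T).indicator
        (fun s => φ g' (s - (h l) • α g')) r) :
    ∀ l : Fin L, ∀ r ∈ ΩbarT, Astarφ l (r + (h l) • α g) = γ l * φ g r := by
  intro l r hr
  rw [hAstar, ← Finset.mul_sum,
    Fintype.sum_indicator_apply_of_mem_of_forall_notMem
      (fun g' => Metric.closedBall (h l • α g') T) (fun g' s => φ g' (s - h l • α g'))
      (hin l r hr) fun g' hg' => hdisj l g' hg' r hr,
    add_sub_cancel_right]

theorem stmt_8 (T : ℝ) (hT : 0 < T) (G L : ℕ)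
    (α : Fin G → EuclideanSpace ℝ (Fin 2)) (hunit : ∀ g, ‖α g‖ = 1)
    (hinj : Function.Injective α)
    (h : Fin L → ℝ) (hpos : ∀ l, 0 < h l) (hmono : StrictMono h)
    (γ : Fin L → ℝ) (hγpos : ∀ l, 0 < γ l)
    (g : Fin G)
    (ΩbarT : Set (EuclideanSpace ℝ (Fin 2)))
    (hsub : ΩbarT ⊆ Metric.closedBall (0 : EuclideanSpace ℝ (Fin 2)) T)
    (hin : ∀ l : Fin L, ∀ r ∈ ΩbarT, r + (h l) • α g ∈ Metric.closedBall ((h l) • α g) T)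
    (hdisj : ∀ l : Fin L, ∀ g' : Fin G, g' ≠ g → ∀ r ∈ ΩbarT,
      r + (h l) • α g ∉ Metric.closedBall ((h l) • α g') T)
    (φ : Fin G → EuclideanSpace ℝ (Fin 2) → ℝ)
    (Astarφ : Fin L → EuclideanSpace ℝ (Fin 2) → ℝ)
    (hAstar : ∀ l r, Astarφ l r = ∑ g' : Fin G,
      γ l * (Metric.closedBall ((h l) • α g') T).indicator
        (fun s => φ g' (s - (h l) • α g')) r) :
    ∀ l : Fin L, ∀ r ∈ ΩbarT, Astarφ l (r + (h l) • α g) = γ l * φ g r :=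
  stmt_8_general T G L α h γ g ΩbarT hin hdisj φ Astarφ hAstar
end
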